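/- arXiv:1910.12287 — 2 statements merged into one kernel-verified Lean document; each statement's English description precedes it below -/
import Mathlib

section
/- Let n ≥ 3, let Ω ⊆ ℝⁿ be open, and let u : ℝⁿ → ℝ be positive and smooth on Ω with Δu = 0 on Ω. Define b = u^(1/(2-n)). Then for every x ∈ Ω, Δ(b²)(x) = 2n‖∇b(x)‖². -/
open scoped BigOperators

/-- The Laplacian of `f : ℝⁿ → ℝ` at `x`: the sum of the pure second partial
derivatives in the standard orthonormal directions (the trace of the second
derivative). -/
noncomputable def laplacian {n : ℕ} (f : EuclideanSpace ℝ (Fin n) → ℝ)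
    (x : EuclideanSpace ℝ (Fin n)) : ℝ :=
  ∑ i : Fin n,
    fderiv ℝ (fun y => fderiv ℝ f y (EuclideanSpace.single i (1 : ℝ))) x
      (EuclideanSpace.single i (1 : ℝ))

variable {n : ℕ}

lemma fderiv_rpow_aux (v : EuclideanSpace ℝ (Fin n) → ℝ) (p : ℝ)
    (x : EuclideanSpace ℝ (Fin n)) (hv : DifferentiableAt ℝ v x) (hx : v x ≠ 0) :
    fderiv ℝ (fun y => v y ^ p) x = (p * v x ^ (p - 1)) • fderiv ℝ v x :=
  ((Real.hasDerivAt_rpow_const (Or.inl hx)).comp_hasFDerivAt x hv.hasFDerivAt).fderiv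

lemma laplacian_congr {f g : EuclideanSpace ℝ (Fin n) → ℝ}
    {x : EuclideanSpace ℝ (Fin n)} (h : f =ᶠ[nhds x] g) :
    laplacian f x = laplacian g x := by
  unfold laplacian
  refine Finset.sum_congr rfl fun i _ => ?_
  have h1 : (fun y => fderiv ℝ f y (EuclideanSpace.single i (1:ℝ))) =ᶠ[nhds x]
      (fun y => fderiv ℝ g y (EuclideanSpace.single i (1:ℝ))) :=
    (Filter.EventuallyEq.fderiv (𝕜 := ℝ) h).mono fun y hy => by simp only [hy]
  rw [h1.fderiv_eq]

lemma laplacian_rpow (v : EuclideanSpace ℝ (Fin n) → ℝ) (p : ℝ)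
    (x : EuclideanSpace ℝ (Fin n)) (hv : ContDiffAt ℝ (⊤ : ℕ∞) v x) (hx : 0 < v x) :
    laplacian (fun y => v y ^ p) x
      = p * (p - 1) * v x ^ (p - 2)
          * ∑ i : Fin n, (fderiv ℝ v x (EuclideanSpace.single i (1:ℝ))) ^ 2
        + p * v x ^ (p - 1) * laplacian v x := by
  have hvd : ∀ᶠ y in nhds x, ContDiffAt ℝ 2 v y :=
    (hv.of_le (WithTop.coe_le_coe.mpr (le_top : (2:ℕ∞) ≤ ⊤))).eventually (by simp)
  have hpos : ∀ᶠ y in nhds x, 0 < v y :=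
    continuousAt_const.eventually_lt hv.continuousAt hx
  unfold laplacian
  rw [Finset.mul_sum, Finset.mul_sum, ← Finset.sum_add_distrib]
  refine Finset.sum_congr rfl fun i _ => ?_
  set e : EuclideanSpace ℝ (Fin n) := EuclideanSpace.single i (1:ℝ) with he
  have heq : (fun y => fderiv ℝ (fun z => v z ^ p) y e) =ᶠ[nhds x]
      (fun y => (p * v y ^ (p - 1)) * fderiv ℝ v y e) := by
    filter_upwards [hvd, hpos] with y hy hy0
    rw [fderiv_rpow_aux v p y (hy.differentiableAt (by simp)) hy0.ne']
    simp
  rw [heq.fderiv_eq]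
  have hdv : DifferentiableAt ℝ v x := hv.differentiableAt (by simp)
  have hdfv : DifferentiableAt ℝ (fderiv ℝ v) x :=
    (hv.fderiv_right (m := 1) (WithTop.coe_le_coe.mpr le_top)).differentiableAt one_ne_zero
  have hBdiff : HasFDerivAt (fun y => fderiv ℝ v y e)
      ((ContinuousLinearMap.apply ℝ ℝ e).comp (fderiv ℝ (fderiv ℝ v) x)) x :=
    ((ContinuousLinearMap.apply ℝ ℝ e).hasFDerivAt).comp x hdfv.hasFDerivAt
  have hAdiff : DifferentiableAt ℝ (fun y => p * v y ^ (p - 1)) x :=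
    (differentiableAt_const p).mul (hdv.rpow_const (Or.inl hx.ne'))
  rw [fderiv_fun_mul hAdiff hBdiff.differentiableAt]
  have hA : fderiv ℝ (fun y => p * v y ^ (p - 1)) x
      = p • (((p - 1) * v x ^ (p - 1 - 1)) • fderiv ℝ v x) := by
    rw [fderiv_const_mul (hdv.rpow_const (Or.inl hx.ne')) p,
      fderiv_rpow_aux v (p - 1) x hdv hx.ne']
  have h2 : p - 1 - 1 = p - 2 := by ring
  rw [hA, hBdiff.fderiv, h2]
  simp only [ContinuousLinearMap.add_apply, ContinuousLinearMap.smul_apply,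
    ContinuousLinearMap.comp_apply, ContinuousLinearMap.apply_apply, smul_eq_mul]
  ring


lemma norm_gradient_sq (g : EuclideanSpace ℝ (Fin n) → ℝ) (x : EuclideanSpace ℝ (Fin n)) :
    ‖gradient g x‖ ^ 2
      = ∑ i : Fin n, (fderiv ℝ g x (EuclideanSpace.single i (1:ℝ))) ^ 2 := by
  have hw : ∀ i : Fin n, gradient g x i = fderiv ℝ g x (EuclideanSpace.single i (1:ℝ)) := by
    intro i
    have h1 : inner ℝ (gradient g x) (EuclideanSpace.single i (1:ℝ))
        = fderiv ℝ g x (EuclideanSpace.single i (1:ℝ)) :=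
      InnerProductSpace.toDual_symm_apply
    rw [real_inner_comm, EuclideanSpace.inner_single_left] at h1
    simpa using h1
  rw [← real_inner_self_eq_norm_sq, PiLp.inner_apply]
  refine Finset.sum_congr rfl fun i _ => ?_
  simp [hw i, RCLike.inner_apply, sq]

/-- If `u` is positive, smooth and harmonic on an open set `Ω ⊆ ℝⁿ`, `n ≥ 3`,
then `b = u^(1/(2-n))` satisfies `Δ b² = 2 n ‖∇ b‖²` on `Ω`. -/
theorem laplacian_sq_of_harmonic_power (n : ℕ) (hn : 3 ≤ n)
    (Ω : Set (EuclideanSpace ℝ (Fin n))) (hΩ : IsOpen Ω)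
    (u : EuclideanSpace ℝ (Fin n) → ℝ)
    (hu_pos : ∀ x ∈ Ω, 0 < u x)
    (hu_smooth : ContDiffOn ℝ (⊤ : ℕ∞) u Ω)
    (hu_harm : ∀ x ∈ Ω, laplacian u x = 0)
    (b : EuclideanSpace ℝ (Fin n) → ℝ)
    (hb : ∀ x, b x = u x ^ ((1 : ℝ) / (2 - n))) :
    ∀ x ∈ Ω,
      laplacian (fun y => (b y) ^ 2) x = 2 * n * ‖gradient b x‖ ^ 2 := by
  intro x hx
  set α : ℝ := (1 : ℝ) / (2 - n) with hα_def
  have hn3 : (3:ℝ) ≤ (n:ℝ) := by exact_mod_cast hn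
  have hn' : (2:ℝ) - n ≠ 0 := by linarith
  have hb' : b = fun y => u y ^ α := funext hb
  have hux : 0 < u x := hu_pos x hx
  have hcd : ContDiffAt ℝ (⊤ : ℕ∞) u x := hu_smooth.contDiffAt (hΩ.mem_nhds hx)
  have hupos : ∀ᶠ y in nhds x, 0 < u y :=
    (hΩ.eventually_mem hx).mono fun y hy => hu_pos y hy
  have hsq : (fun y => (b y) ^ 2) =ᶠ[nhds x] (fun y => u y ^ (2 * α)) := by
    filter_upwards [hupos] with y hy
    rw [hb y, ← Real.rpow_natCast (u y ^ α) 2, ← Real.rpow_mul hy.le]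
    congr 1
    push_cast; ring
  rw [laplacian_congr hsq, laplacian_rpow u (2*α) x hcd hux, hu_harm x hx, mul_zero, add_zero]
  have hgrad : ∀ i : Fin n, fderiv ℝ b x (EuclideanSpace.single i (1:ℝ))
      = α * u x ^ (α - 1) * fderiv ℝ u x (EuclideanSpace.single i (1:ℝ)) := by
    intro i
    rw [hb', fderiv_rpow_aux u α x (hcd.differentiableAt (by simp)) hux.ne']
    simp
  rw [norm_gradient_sq]
  simp only [hgrad]
  have hP : (u x ^ (α - 1)) ^ 2 = u x ^ (2*α - 2) := by
    rw [← Real.rpow_natCast (u x ^ (α-1)) 2, ← Real.rpow_mul hux.le]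
    congr 1; push_cast; ring
  have hsum : ∑ i : Fin n, (α * u x ^ (α-1) * fderiv ℝ u x (EuclideanSpace.single i (1:ℝ))) ^ 2
      = α^2 * u x ^ (2*α - 2)
        * ∑ i : Fin n, (fderiv ℝ u x (EuclideanSpace.single i (1:ℝ))) ^ 2 := by
    rw [Finset.mul_sum]
    refine Finset.sum_congr rfl fun i _ => ?_
    rw [mul_pow, mul_pow, hP]
  rw [hsum]
  have hα1 : α * (2 - (n:ℝ)) = 1 := by
    rw [hα_def, one_div, inv_mul_cancel₀ hn']
  have key : (2*α) * (2*α - 1) = 2 * (n:ℝ) * α^2 := by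
    linear_combination (2*α) * hα1
  linear_combination (u x ^ (2*α - 2)
    * ∑ i : Fin n, (fderiv ℝ u x (EuclideanSpace.single i (1:ℝ))) ^ 2) * key
end

section
/- Let (S, μ) be a measure space with 0 < μ(S) < ∞, let E be a finite-dimensional real inner product space, and let s < t be reals. Suppose Q : S × [s,t] → (symmetric bilinear forms on E) is such that Q(x,τ) is positive definite for all (x,τ), τ ↦ Q(x,τ) is differentiable with derivative Q̇(x,τ), and all the functions appearing below are measurable and integrable. Define N(x,τ) = sup over v ≠ 0 of |Q̇(x,τ)(v,v)| / Q(x,τ)(v,v). Then the average (1/μ(S)) ∫_S sup_{v≠0} |log( Q(x,t)(v,v) / Q(x,s)(v,v) )| dμ(x) is at most √(t−s) · ( (1/μ(S)) ∫_S ∫ₛᵗ N(x,τ)² dτ dμ(x) )^(1/2). -/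
/-!
For fixed `x` and `v ≠ 0`, the function `τ ↦ log Q(x,τ)(v,v)` has derivative
`Q'(x,τ)(v,v) / Q(x,τ)(v,v)`, which is bounded in absolute value by `N(x,τ)`; this supremum is
finite because the quotient is invariant under scaling `v`, so its values are those it takes on
the compact unit sphere. The fundamental theorem of calculus and Cauchy–Schwarz on `[s,t]` bound
the distortion at `x` by `√(t-s) (∫ₛᵗ N(x,τ)² dτ)^(1/2)`, and Cauchy–Schwarz over `S`, against
the constant `1`, turns the average of these square roots into the square root of the average.
-/

open MeasureTheory Set

section CauchySchwarz

variable {α : Type*} [MeasurableSpace α] {μ : Measure α} {g : α → ℝ}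

theorem memLp_two_sqrt (hg₀ : 0 ≤ᵐ[μ] g) (hg : Integrable g μ) :
    MemLp (fun x => √(g x)) 2 μ := by
  refine (memLp_two_iff_integrable_sq hg.1.aemeasurable.sqrt.aestronglyMeasurable).2 (hg.congr ?_)
  filter_upwards [hg₀] with x hx using (Real.sq_sqrt hx).symm

theorem integral_sqrt_le_sqrt_measureReal_mul_sqrt_integral [IsFiniteMeasure μ]
    (hg₀ : 0 ≤ᵐ[μ] g) (hg : Integrable g μ) :
    ∫ x, √(g x) ∂μ ≤ √(μ.real univ) * √(∫ x, g x ∂μ) := by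
  have holder := integral_mul_le_Lp_mul_Lq_of_nonneg Real.HolderConjugate.two_two
    (ae_of_all _ fun x => Real.sqrt_nonneg (g x)) (ae_of_all _ fun _ => zero_le_one)
    (by simpa using memLp_two_sqrt hg₀ hg) (by simpa using memLp_const (μ := μ) (1 : ℝ))
  have hsq : ∫ x, √(g x) ^ (2 : ℝ) ∂μ = ∫ x, g x ∂μ := by
    refine integral_congr_ae ?_
    filter_upwards [hg₀] with x hx
    rw [Real.rpow_two, Real.sq_sqrt hx]
  simp only [mul_one, Real.one_rpow, integral_const, smul_eq_mul, hsq] at holder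
  rwa [Real.sqrt_eq_rpow, Real.sqrt_eq_rpow, mul_comm]

end CauchySchwarz

theorem norm_sub_le_sqrt_mul_sqrt_integral_sq {E : Type*} [NormedAddCommGroup E]
    [NormedSpace ℝ E] {f : ℝ → E} {M : ℝ → ℝ} {a b : ℝ} (hab : a ≤ b)
    (hfc : ContinuousOn f (Icc a b)) (hfd : DifferentiableOn ℝ f (Ioo a b))
    (hfM : ∀ t ∈ Ioo a b, ‖deriv f t‖ ≤ M t)
    (hM : IntervalIntegrable (fun t => M t ^ 2) volume a b) :
    ‖f b - f a‖ ≤ √(b - a) * √(∫ t in a..b, M t ^ 2) := by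
  have hM₀ : 0 ≤ᵐ[volume.restrict (Ioc a b)] fun t => M t ^ 2 := ae_of_all _ fun _ => sq_nonneg _
  have hsqrt : IntervalIntegrable (fun t => √(M t ^ 2)) volume a b :=
    (intervalIntegrable_iff_integrableOn_Ioc_of_le hab).2
      ((memLp_two_sqrt hM₀ hM.1).integrable one_le_two)
  have hfM' : ∀ t ∈ Ioo a b, ‖deriv f t‖ ≤ √(M t ^ 2) := fun t ht =>
    (hfM t ht).trans ((le_abs_self _).trans (Real.sqrt_sq_eq_abs _).ge)
  calc ‖f b - f a‖ ≤ ∫ t in a..b, √(M t ^ 2) :=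
        norm_sub_le_integral_of_norm_deriv_le_of_le hab hfc hfd (ae_of_all _ hfM') hsqrt
    _ ≤ √(b - a) * √(∫ t in a..b, M t ^ 2) := by
        rw [intervalIntegral.integral_of_le hab, intervalIntegral.integral_of_le hab]
        have := integral_sqrt_le_sqrt_measureReal_mul_sqrt_integral hM₀ hM.1
        rwa [measureReal_restrict_apply_univ, Real.volume_real_Ioc_of_le hab] at this

theorem abs_log_div_le_sqrt_mul_sqrt_integral_sq {q q' M : ℝ → ℝ} {a b : ℝ} (hab : a ≤ b)
    (hq : ∀ τ ∈ Icc a b, 0 < q τ) (hq' : ∀ τ ∈ Icc a b, HasDerivAt q (q' τ) τ)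
    (hM : ∀ τ ∈ Ioo a b, |q' τ| / q τ ≤ M τ)
    (hM2 : IntervalIntegrable (fun τ => M τ ^ 2) volume a b) :
    |Real.log (q b / q a)| ≤ √(b - a) * √(∫ τ in a..b, M τ ^ 2) := by
  have hlog : ∀ τ ∈ Icc a b, HasDerivAt (fun σ => Real.log (q σ)) (q' τ / q τ) τ :=
    fun τ hτ => (hq' τ hτ).log (hq τ hτ).ne'
  rw [Real.log_div (hq b (right_mem_Icc.2 hab)).ne' (hq a (left_mem_Icc.2 hab)).ne']
  refine norm_sub_le_sqrt_mul_sqrt_integral_sq hab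
    (fun τ hτ => (hlog τ hτ).continuousAt.continuousWithinAt)
    (fun τ hτ => (hlog τ (Ioo_subset_Icc_self hτ)).differentiableAt.differentiableWithinAt)
    (fun τ hτ => ?_) hM2
  have hτ' := Ioo_subset_Icc_self hτ
  rw [(hlog τ hτ').deriv, Real.norm_eq_abs, abs_div, abs_of_pos (hq τ hτ')]
  exact hM τ hτ

section RayleighQuotient

variable {E : Type*} [NormedAddCommGroup E] [NormedSpace ℝ E] [FiniteDimensional ℝ E]

theorem bddAbove_range_of_continuousOn_of_inv_norm_smul {f : E → ℝ}
    (hc : ContinuousOn f {w | w ≠ 0}) (hs : ∀ w : E, w ≠ 0 → f (‖w‖⁻¹ • w) = f w) :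
    BddAbove (range fun v : {v : E // v ≠ 0} => f v) := by
  have hsphere : Metric.sphere (0 : E) 1 ⊆ {w | w ≠ 0} :=
    fun w hw => ne_zero_of_mem_unit_sphere ⟨w, hw⟩
  refine ((isCompact_sphere 0 1).bddAbove_image (hc.mono hsphere)).mono ?_
  rintro _ ⟨⟨v, hv⟩, rfl⟩
  exact ⟨‖v‖⁻¹ • v, by simp [norm_smul, hv], hs v hv⟩

theorem bddAbove_range_abs_apply_div_of_pos (B P : E →ₗ[ℝ] E →ₗ[ℝ] ℝ)
    (hP : ∀ v, v ≠ 0 → 0 < P v v) :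
    BddAbove (range fun v : {v : E // v ≠ 0} => |B v v| / P v v) := by
  have hdiag : ∀ C : E →ₗ[ℝ] E →ₗ[ℝ] ℝ, Continuous fun v => C v v := fun C =>
    C.toContinuousBilinearMap.continuous₂.comp (continuous_id.prodMk continuous_id)
  refine bddAbove_range_of_continuousOn_of_inv_norm_smul (f := fun v => |B v v| / P v v)
    ((hdiag B).abs.continuousOn.div (hdiag P).continuousOn fun w hw => (hP w hw).ne') ?_
  intro w hw
  have hc : (0 : ℝ) < ‖w‖⁻¹ ^ 2 := by positivity
  have hsmul (C : E →ₗ[ℝ] E →ₗ[ℝ] ℝ) :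
      C (‖w‖⁻¹ • w) (‖w‖⁻¹ • w) = ‖w‖⁻¹ ^ 2 * C w w := by
    simp only [map_smul, LinearMap.smul_apply, smul_eq_mul]; ring
  simp only [hsmul, abs_mul, abs_of_pos hc, mul_div_mul_left _ _ hc.ne']

end RayleighQuotient

theorem avg_log_distortion_le_general {S : Type*} [MeasurableSpace S] (μ : Measure S)
    (hμ_fin : μ Set.univ < ⊤)
    {E : Type*} [NormedAddCommGroup E] [InnerProductSpace ℝ E]
    [FiniteDimensional ℝ E]
    (s t : ℝ) (hst : s < t)
    (Q Q' : S → ℝ → E →ₗ[ℝ] E →ₗ[ℝ] ℝ)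
    (hQ_posdef : ∀ x τ (v : E), v ≠ 0 → 0 < Q x τ v v)
    (hQ_deriv : ∀ x (v w : E) τ, τ ∈ Set.Icc s t →
      HasDerivAt (fun σ => Q x σ v w) (Q' x τ v w) τ)
    (N : S → ℝ → ℝ)
    (hN : ∀ x τ, N x τ = ⨆ v : {v : E // v ≠ 0}, |Q' x τ v v| / Q x τ v v)
    (L : S → ℝ)
    (hL : ∀ x, L x = ⨆ v : {v : E // v ≠ 0}, |Real.log (Q x t v v / Q x s v v)|)
    (hN_int : ∀ x, IntervalIntegrable (fun τ => (N x τ) ^ 2) volume s t)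
    (hN_int_meas : Integrable (fun x => ∫ τ in s..t, (N x τ) ^ 2) μ) :
    (1 / (μ Set.univ).toReal) * ∫ x, L x ∂μ ≤
      Real.sqrt (t - s) *
        ((1 / (μ Set.univ).toReal) *
          ∫ x, (∫ τ in s..t, (N x τ) ^ 2) ∂μ) ^ ((1 : ℝ) / 2) := by
  have : IsFiniteMeasure μ := ⟨hμ_fin⟩
  set A := fun x => ∫ τ in s..t, N x τ ^ 2
  have hA₀ : 0 ≤ᵐ[μ] A :=
    ae_of_all _ fun x => intervalIntegral.integral_nonneg hst.le fun τ _ => sq_nonneg _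
  have hL_le : ∀ x, L x ≤ √(t - s) * √(A x) := fun x => by
    rw [hL]
    refine Real.iSup_le (fun ⟨v, hv⟩ => ?_) (by positivity)
    refine abs_log_div_le_sqrt_mul_sqrt_integral_sq hst.le (fun τ _ => hQ_posdef x τ v hv)
      (hQ_deriv x v v) (fun τ _ => ?_) (hN_int x)
    rw [hN]
    exact le_ciSup (bddAbove_range_abs_apply_div_of_pos _ _ (hQ_posdef x τ)) ⟨v, hv⟩
  have hL₀ : ∀ x, 0 ≤ L x := fun x => by
    rw [hL]
    exact Real.iSup_nonneg fun _ => abs_nonneg _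
  have hL_int : ∫ x, L x ∂μ ≤ √(t - s) * (√(μ.real univ) * √(∫ x, A x ∂μ)) :=
    calc ∫ x, L x ∂μ ≤ ∫ x, √(t - s) * √(A x) ∂μ :=
          integral_mono_of_nonneg (ae_of_all _ hL₀)
            (((memLp_two_sqrt hA₀ hN_int_meas).integrable one_le_two).const_mul _)
            (ae_of_all _ hL_le)
      _ = √(t - s) * ∫ x, √(A x) ∂μ := integral_const_mul _ _
      _ ≤ _ := mul_le_mul_of_nonneg_left
          (integral_sqrt_le_sqrt_measureReal_mul_sqrt_integral hA₀ hN_int_meas) (Real.sqrt_nonneg _)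
  calc (1 / (μ univ).toReal) * ∫ x, L x ∂μ
      ≤ (1 / μ.real univ) * (√(t - s) * (√(μ.real univ) * √(∫ x, A x ∂μ))) :=
        mul_le_mul_of_nonneg_left hL_int (by positivity)
    _ = √(t - s) * ((1 / μ.real univ) * ∫ x, A x ∂μ) ^ ((1 : ℝ) / 2) := by
        rw [← Real.sqrt_eq_rpow, Real.sqrt_mul (by positivity), one_div (μ.real univ),
          Real.sqrt_inv, ← Real.sqrt_div_self]
        ring

/-- Lemma 2.3 of the paper in abstract form. Let `(S, μ)` be a measure space of
finite positive total mass, `E` a finite-dimensional real inner product space,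
and `Q(x,τ)` a family of positive definite symmetric bilinear forms on `E`,
differentiable in `τ` with derivative `Q'(x,τ)`. Then the average over `S` of
the maximal logarithmic distortion between `Q(x,t)` and `Q(x,s)` is bounded by
`√(t-s)` times the square root of the averaged `L²`-in-time norm of
`N(x,τ) = sup_{v≠0} |Q'(x,τ)(v,v)|/Q(x,τ)(v,v)`. -/
theorem avg_log_distortion_le {S : Type*} [MeasurableSpace S] (μ : Measure S)
    (hμ_pos : 0 < μ Set.univ) (hμ_fin : μ Set.univ < ⊤)
    {E : Type*} [NormedAddCommGroup E] [InnerProductSpace ℝ E]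
    [FiniteDimensional ℝ E]
    (s t : ℝ) (hst : s < t)
    (Q Q' : S → ℝ → E →ₗ[ℝ] E →ₗ[ℝ] ℝ)
    (hQ_symm : ∀ x τ v w, Q x τ v w = Q x τ w v)
    (hQ_posdef : ∀ x τ (v : E), v ≠ 0 → 0 < Q x τ v v)
    (hQ_deriv : ∀ x (v w : E) τ, τ ∈ Set.Icc s t →
      HasDerivAt (fun σ => Q x σ v w) (Q' x τ v w) τ)
    (N : S → ℝ → ℝ)
    (hN : ∀ x τ, N x τ = ⨆ v : {v : E // v ≠ 0}, |Q' x τ v v| / Q x τ v v)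
    (L : S → ℝ)
    (hL : ∀ x, L x = ⨆ v : {v : E // v ≠ 0}, |Real.log (Q x t v v / Q x s v v)|)
    (hL_meas : Integrable L μ)
    (hN_int : ∀ x, IntervalIntegrable (fun τ => (N x τ) ^ 2) volume s t)
    (hN_int_meas : Integrable (fun x => ∫ τ in s..t, (N x τ) ^ 2) μ) :
    (1 / (μ Set.univ).toReal) * ∫ x, L x ∂μ ≤
      Real.sqrt (t - s) *
        ((1 / (μ Set.univ).toReal) *
          ∫ x, (∫ τ in s..t, (N x τ) ^ 2) ∂μ) ^ ((1 : ℝ) / 2) :=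
  avg_log_distortion_le_general μ hμ_fin s t hst Q Q' hQ_posdef hQ_deriv N hN L hL hN_int
    hN_int_meas
end
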